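/- Assume (X,d) is a proper, geodesic, non-branching complete separable metric space and that the Borel measure m satisfies the evolution estimate with rate f. Let Λ⊂Γ be compact, {y_i}_{i∈ℕ}⊂P₂(Λ) dense, and for n∈ℕ set E_n(i):={x∈P₁(Λ) : c(x,y_i)−φ^c(y_i) ≤ c(x,y_j)−φ^c(y_j), j=1,…,n} and Λ_n:=⋃_{i=1}^n E_n(i)×{y_i}. Then for every compact A⊂P₁(Λ) and every t∈[0,1), m(A_{t,Λ_n}) ≥ f(t)·m(A). -/

import Mathlib

open Set Metric MeasureTheory

/-- A geodesic parametrized on `[0,1]`: `d(γ_s,γ_t) = |s-t| · d(γ_0,γ_1)`. -/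
def IsGeodesic {X : Type*} [MetricSpace X] (γ : ℝ → X) : Prop :=
  ∀ s ∈ Set.Icc (0:ℝ) 1, ∀ t ∈ Set.Icc (0:ℝ) 1,
    dist (γ s) (γ t) = |s - t| * dist (γ 0) (γ 1)

/-- A geodesic metric space: every pair of points is joined by a geodesic. -/
def GeodesicMetricSpace (X : Type*) [MetricSpace X] : Prop :=
  ∀ x y : X, ∃ γ : ℝ → X, IsGeodesic γ ∧ γ 0 = x ∧ γ 1 = y

/-- Non-branching: two geodesics agreeing on `[0,t]` for some `t ∈ (0,1)` agree on `[0,1]`. -/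
def NonBranching (X : Type*) [MetricSpace X] : Prop :=
  ∀ γ₁ γ₂ : ℝ → X, IsGeodesic γ₁ → IsGeodesic γ₂ →
    ∀ t ∈ Set.Ioo (0:ℝ) 1, (∀ s ∈ Set.Icc (0:ℝ) t, γ₁ s = γ₂ s) →
      ∀ s ∈ Set.Icc (0:ℝ) 1, γ₁ s = γ₂ s

/-- The evolution set `A_{t,Λ} = {γ_t : γ geodesic, γ_0 ∈ A, (γ_0,γ_1) ∈ Λ}`. -/
def evoSet {X : Type*} [MetricSpace X] (A : Set X) (Λ : Set (X × X)) (t : ℝ) : Set X :=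
  {z | ∃ γ : ℝ → X, IsGeodesic γ ∧ γ 0 ∈ A ∧ (γ 0, γ 1) ∈ Λ ∧ γ t = z}

/-- `m` satisfies the evolution estimate with rate `f` (a consequence of `MCP(K,N)`):
`f : [0,1] → [0,1]` is continuous, `f(0) = 1`, and `m(E_{t,E×{y}}) ≥ f(t)·m(E)` for every
compact `E`, every `y` and every `t ∈ [0,1]`. -/
def EvolutionEstimate {X : Type*} [MetricSpace X] [MeasurableSpace X]
    (m : Measure X) (f : ℝ → ℝ) : Prop :=
  ContinuousOn f (Set.Icc 0 1) ∧ f 0 = 1 ∧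
    (∀ t ∈ Set.Icc (0:ℝ) 1, f t ∈ Set.Icc (0:ℝ) 1) ∧
    ∀ E : Set X, IsCompact E → ∀ y : X, ∀ t ∈ Set.Icc (0:ℝ) 1,
      ENNReal.ofReal (f t) * m E ≤ m (evoSet E (E ×ˢ ({y} : Set X)) t)

/-- The contact set `Γ = {(x,y) ∈ K × K : φ(x) + φᶜ(y) = c(x,y)}`. -/
def contactSet {X : Type*} [MetricSpace X] (h : ℝ → ℝ) (φ φc : X → ℝ) (K : Set X) :
    Set (X × X) :=
  {p | p.1 ∈ K ∧ p.2 ∈ K ∧ φ p.1 + φc p.2 = h (dist p.1 p.2)}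

/-- The set `E_n(i) = {x ∈ P₁(Λ) : c(x,y_i) - φᶜ(y_i) ≤ c(x,y_j) - φᶜ(y_j), j = 1,…,n}`. -/
def En {X : Type*} [MetricSpace X] (h : ℝ → ℝ) (φc : X → ℝ) (Λ : Set (X × X))
    (y : ℕ → X) (n i : ℕ) : Set X :=
  {x ∈ Prod.fst '' Λ |
    ∀ j < n, h (dist x (y i)) - φc (y i) ≤ h (dist x (y j)) - φc (y j)}

/-- The approximating set `Λ_n = ⋃_{i<n} E_n(i) × {y_i}`. -/
def Λn {X : Type*} [MetricSpace X] (h : ℝ → ℝ) (φc : X → ℝ) (Λ : Set (X × X))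
    (y : ℕ → X) (n : ℕ) : Set (X × X) :=
  ⋃ i < n, En h φc Λ y n i ×ˢ ({y i} : Set X)

/-!
Up to `ε` in measure, `A` is the disjoint union of compact sets `C i` lying in the `c`-Laguerre
cells of the `y i`, and the evolution estimate applies to each `C i` with its single target
`y i`. The evolved sets are disjoint: the cells are `c`-monotone, so two geodesics from
different cells meeting at a time `t < 1` must have equal lengths (strict convexity of `h`) and
can be glued into a new geodesic, which non-branching forbids unless they start at the same
point. Summing over `i` gives the estimate.
-/

open scoped ENNReal NNReal

section

variable {X : Type*} [MetricSpace X]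

namespace IsGeodesic

variable {γ : ℝ → X}

lemma dist_zero_left (hγ : IsGeodesic γ) {t : ℝ} (ht : t ∈ Icc (0:ℝ) 1) :
    dist (γ 0) (γ t) = t * dist (γ 0) (γ 1) := by
  rw [hγ 0 (left_mem_Icc.2 zero_le_one) t ht, zero_sub, abs_neg, abs_of_nonneg ht.1]

lemma dist_one_right (hγ : IsGeodesic γ) {t : ℝ} (ht : t ∈ Icc (0:ℝ) 1) :
    dist (γ t) (γ 1) = (1 - t) * dist (γ 0) (γ 1) := by
  rw [hγ t ht 1 (right_mem_Icc.2 zero_le_one), abs_sub_comm, abs_of_nonneg (sub_nonneg.2 ht.2)]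

lemma comp_one_sub (hγ : IsGeodesic γ) : IsGeodesic (fun s => γ (1 - s)) := by
  intro s hs s' hs'
  have hmem : ∀ u ∈ Icc (0:ℝ) 1, 1 - u ∈ Icc (0:ℝ) 1 := fun u hu =>
    ⟨by linarith [hu.2], by linarith [hu.1]⟩
  simp only [sub_zero, sub_self]
  rw [hγ _ (hmem s hs) _ (hmem s' hs'), dist_comm (γ 0), sub_sub_sub_cancel_left, abs_sub_comm]

lemma dist_comp_div_sub (hγ : IsGeodesic γ) {a b s s' : ℝ} (hab : a < b)
    (hs : s ∈ Icc a b) (hs' : s' ∈ Icc a b) :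
    dist (γ ((s - a) / (b - a))) (γ ((s' - a) / (b - a))) =
      |s - s'| * (dist (γ 0) (γ 1) / (b - a)) := by
  have hba : 0 < b - a := sub_pos.2 hab
  have hmem : ∀ u ∈ Icc a b, (u - a) / (b - a) ∈ Icc (0:ℝ) 1 := fun u hu =>
    ⟨div_nonneg (sub_nonneg.2 hu.1) hba.le, (div_le_one hba).2 (by linarith [hu.2])⟩
  rw [hγ _ (hmem s hs) _ (hmem s' hs'), div_sub_div_same, sub_sub_sub_cancel_right, abs_div,
    abs_of_pos hba]
  ring

end IsGeodesic

/-- Across `t`, the triangle inequality through `γ_t` bounds `d(γ_s,γ_s')` from above and the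
one through `γ_0, γ_1` from below. -/
lemma isGeodesic_of_Icc_split {γ : ℝ → X} {t : ℝ} (ht : t ∈ Icc (0:ℝ) 1)
    (hleft : ∀ s ∈ Icc 0 t, ∀ s' ∈ Icc 0 t, dist (γ s) (γ s') = |s - s'| * dist (γ 0) (γ 1))
    (hright : ∀ s ∈ Icc t 1, ∀ s' ∈ Icc t 1, dist (γ s) (γ s') = |s - s'| * dist (γ 0) (γ 1)) :
    IsGeodesic γ := by
  intro s hs s' hs'
  wlog hss : s ≤ s' generalizing s s'
  · rw [dist_comm, abs_sub_comm]; exact this s' hs' s hs (le_of_not_ge hss)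
  rcases le_total s' t with hs't | hts'
  · exact hleft s ⟨hs.1, hss.trans hs't⟩ s' ⟨hs'.1, hs't⟩
  rcases le_total t s with hts | hst
  · exact hright s ⟨hts, hs.2⟩ s' ⟨hts', hs'.2⟩
  set D := dist (γ 0) (γ 1)
  have h0s := hleft 0 ⟨le_rfl, ht.1⟩ s ⟨hs.1, hst⟩
  have hst' := hleft s ⟨hs.1, hst⟩ t ⟨ht.1, le_rfl⟩
  have hts'' := hright t ⟨le_rfl, ht.2⟩ s' ⟨hts', hs'.2⟩
  have hs'1 := hright s' ⟨hts', hs'.2⟩ 1 ⟨ht.2, le_rfl⟩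
  rw [abs_of_nonpos (by linarith [hs.1])] at h0s
  rw [abs_of_nonpos (by linarith)] at hst'
  rw [abs_of_nonpos (by linarith)] at hts''
  rw [abs_of_nonpos (by linarith [hs'.2])] at hs'1
  rw [abs_of_nonpos (by linarith)]
  apply le_antisymm
  · calc dist (γ s) (γ s') ≤ dist (γ s) (γ t) + dist (γ t) (γ s') := dist_triangle _ _ _
      _ = -(s - s') * D := by rw [hst', hts'']; ring
  · have := dist_triangle4 (γ 0) (γ s) (γ s') (γ 1)
    rw [h0s, hs'1] at this
    linarith

lemma IsGeodesic.piecewise {γ σ : ℝ → X} (hγ : IsGeodesic γ) (hσ : IsGeodesic σ) {t : ℝ}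
    (ht : t ∈ Ico (0:ℝ) 1) (hmeet : γ t = σ t) (hlen : dist (γ 0) (γ 1) = dist (σ 0) (σ 1))
    (hcross : dist (γ 0) (σ 1) = dist (γ 0) (γ 1)) :
    IsGeodesic (fun s => if s ≤ t then γ s else σ s) := by
  have hleft : ∀ s ≤ t, (if s ≤ t then γ s else σ s) = γ s := fun s hs => if_pos hs
  have hright : ∀ s, t ≤ s → (if s ≤ t then γ s else σ s) = σ s := fun s hs => by
    split_ifs with hst
    · rw [le_antisymm hst hs, hmeet]
    · rfl
  refine isGeodesic_of_Icc_split (Ico_subset_Icc_self ht) ?_ ?_ <;> intro s hs s' hs' <;>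
    simp only [hleft 0 ht.1, hright 1 ht.2.le, hcross]
  · rw [hleft s hs.2, hleft s' hs'.2]
    exact hγ s ⟨hs.1, hs.2.trans ht.2.le⟩ s' ⟨hs'.1, hs'.2.trans ht.2.le⟩
  · rw [hright s hs.1, hright s' hs'.1, hlen]
    exact hσ s ⟨ht.1.trans hs.1, hs.2⟩ s' ⟨ht.1.trans hs'.1, hs'.2⟩

namespace NonBranching

lemma eqOn_of_eqOn_Icc_right (hnb : NonBranching X) {γ σ : ℝ → X} (hγ : IsGeodesic γ)
    (hσ : IsGeodesic σ) {t : ℝ} (ht : t ∈ Ioo (0:ℝ) 1) (heq : ∀ s ∈ Icc t 1, γ s = σ s) :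
    ∀ s ∈ Icc (0:ℝ) 1, γ s = σ s := by
  intro s hs
  have := hnb _ _ hγ.comp_one_sub hσ.comp_one_sub (1 - t) ⟨by linarith [ht.2], by linarith [ht.1]⟩
    (fun u hu => heq (1 - u) ⟨by linarith [hu.2], by linarith [hu.1]⟩)
    (1 - s) ⟨by linarith [hs.2], by linarith [hs.1]⟩
  simpa only [sub_sub_cancel] using this

lemma apply_zero_eq_of_apply_eq (hnb : NonBranching X) {γ σ : ℝ → X} (hγ : IsGeodesic γ)
    (hσ : IsGeodesic σ) {t : ℝ} (ht : t ∈ Ioo (0:ℝ) 1) (hmeet : γ t = σ t)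
    (hlen : dist (γ 0) (γ 1) = dist (σ 0) (σ 1))
    (hcross : dist (γ 0) (σ 1) = dist (γ 0) (γ 1)) : γ 0 = σ 0 := by
  have hglued := hnb γ _ hγ (hγ.piecewise hσ (Ioo_subset_Ico_self ht) hmeet hlen hcross) t ht
    fun s hs => (if_pos hs.2).symm
  refine eqOn_of_eqOn_Icc_right hnb hγ hσ ht (fun s hs => ?_) 0 (left_mem_Icc.2 zero_le_one)
  rcases hs.1.eq_or_lt with rfl | hts
  · exact hmeet
  · simpa only [if_neg hts.not_ge] using hglued s ⟨ht.1.le.trans hs.1, hs.2⟩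

end NonBranching

lemma StrictConvexOn.strictMonoOn_of_monotoneOn {s : Set ℝ} {h : ℝ → ℝ}
    (hconv : StrictConvexOn ℝ s h) (hmono : MonotoneOn h s) : StrictMonoOn h s := by
  intro u hu v hv huv
  refine (hmono hu hv huv.le).lt_of_ne fun heq => ?_
  have hmid := hconv.2 hu hv huv.ne (by norm_num : (0:ℝ) < 1 / 2) (by norm_num : (0:ℝ) < 1 / 2)
    (by norm_num)
  have hmem := hconv.1 hu hv (by norm_num : (0:ℝ) ≤ 1 / 2) (by norm_num : (0:ℝ) ≤ 1 / 2)
    (by norm_num)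
  have hle := hmono hu hmem (by simp only [smul_eq_mul]; linarith)
  simp only [smul_eq_mul] at hmid hle
  linarith

lemma StrictConvexOn.eq_of_add_le_add_of_le_convex_combo {h : ℝ → ℝ}
    (hconv : StrictConvexOn ℝ (Ici 0) h) (hmono : MonotoneOn h (Ici 0)) {a b p q t : ℝ}
    (ha : 0 ≤ a) (hb : 0 ≤ b) (hp : 0 ≤ p) (hq : 0 ≤ q) (ht : t ∈ Ioo (0:ℝ) 1)
    (hpab : p ≤ t * a + (1 - t) * b) (hqab : q ≤ t * b + (1 - t) * a)
    (hsum : h a + h b ≤ h p + h q) : a = b ∧ p = a := by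
  have h1t : 0 < 1 - t := sub_pos.2 ht.2
  have hab : a = b := by
    by_contra hne
    have c1 := hconv.2 ha hb hne ht.1 h1t (by ring)
    have c2 := hconv.2 hb ha (Ne.symm hne) ht.1 h1t (by ring)
    have m1 := hmono hp (by nlinarith : (0:ℝ) ≤ t * a + (1 - t) * b) hpab
    have m2 := hmono hq (by nlinarith : (0:ℝ) ≤ t * b + (1 - t) * a) hqab
    simp only [smul_eq_mul] at c1 c2
    linarith
  subst hab
  refine ⟨rfl, le_antisymm (by linarith) (not_lt.1 fun hpa => ?_)⟩
  have hpa' := (hconv.strictMonoOn_of_monotoneOn hmono) hp ha hpa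
  have hqa := hmono hq ha (by linarith)
  linarith

/-- Non-crossing of `c`-monotone transport geodesics, `c = h ∘ d`. -/
theorem NonBranching.apply_zero_eq_of_cost_add_le (hnb : NonBranching X) {h : ℝ → ℝ}
    (hconv : StrictConvexOn ℝ (Ici 0) h) (hmono : MonotoneOn h (Ici 0)) {γ σ : ℝ → X}
    (hγ : IsGeodesic γ) (hσ : IsGeodesic σ)
    (hcost : h (dist (γ 0) (γ 1)) + h (dist (σ 0) (σ 1)) ≤
      h (dist (γ 0) (σ 1)) + h (dist (σ 0) (γ 1)))
    {t : ℝ} (ht : t ∈ Ico (0:ℝ) 1) (hmeet : γ t = σ t) : γ 0 = σ 0 := by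
  rcases ht.1.eq_or_lt with rfl | ht0
  · exact hmeet
  have htI : t ∈ Icc (0:ℝ) 1 := Ico_subset_Icc_self ht
  have hp : dist (γ 0) (σ 1) ≤ t * dist (γ 0) (γ 1) + (1 - t) * dist (σ 0) (σ 1) := by
    calc dist (γ 0) (σ 1) ≤ dist (γ 0) (γ t) + dist (σ t) (σ 1) := by
          rw [hmeet]; exact dist_triangle _ _ _
      _ = _ := by rw [hγ.dist_zero_left htI, hσ.dist_one_right htI]
  have hq : dist (σ 0) (γ 1) ≤ t * dist (σ 0) (σ 1) + (1 - t) * dist (γ 0) (γ 1) := by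
    calc dist (σ 0) (γ 1) ≤ dist (σ 0) (σ t) + dist (γ t) (γ 1) := by
          rw [hmeet]; exact dist_triangle _ _ _
      _ = _ := by rw [hσ.dist_zero_left htI, hγ.dist_one_right htI]
  obtain ⟨hlen, hcross⟩ := hconv.eq_of_add_le_add_of_le_convex_combo hmono dist_nonneg
    dist_nonneg dist_nonneg dist_nonneg ⟨ht0, ht.2⟩ hp hq hcost
  exact hnb.apply_zero_eq_of_apply_eq hγ hσ ⟨ht0, ht.2⟩ hmeet hlen hcross

/-- The cell of `y i` in the `c`-Laguerre diagram of the sites `y j`, `j < n`, weighted by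
`φc`; `En h φc Λ y n i = P₁(Λ) ∩ laguerreCell h φc y n i`. -/
def laguerreCell (h : ℝ → ℝ) (φc : X → ℝ) (y : ℕ → X) (n i : ℕ) : Set X :=
  {x | ∀ j < n, h (dist x (y i)) - φc (y i) ≤ h (dist x (y j)) - φc (y j)}

section laguerreCell

variable {h : ℝ → ℝ} {φc : X → ℝ} {y : ℕ → X} {n : ℕ}

lemma exists_mem_laguerreCell (hn : 0 < n) (x : X) : ∃ i < n, x ∈ laguerreCell h φc y n i := by
  obtain ⟨i, hi, hmin⟩ := (Finset.range n).exists_min_image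
    (fun j => h (dist x (y j)) - φc (y j)) ⟨0, Finset.mem_range.2 hn⟩
  exact ⟨i, Finset.mem_range.1 hi, fun j hj => hmin j (Finset.mem_range.2 hj)⟩

lemma measurable_comp_of_monotoneOn_Ici {α : Type*} [MeasurableSpace α] {g : α → ℝ}
    (hg : Measurable g) (hg0 : ∀ a, 0 ≤ g a) (hmono : MonotoneOn h (Ici 0)) :
    Measurable (fun a => h (g a)) := by
  have hmax : Monotone (fun r : ℝ => h (max r 0)) := fun u v huv =>
    hmono (le_max_right u 0) (le_max_right v 0) (max_le_max huv le_rfl)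
  convert hmax.measurable.comp hg using 2 with a
  exact congrArg h (max_eq_left (hg0 a)).symm

lemma measurableSet_laguerreCell [MeasurableSpace X] [OpensMeasurableSpace X]
    (hmono : MonotoneOn h (Ici 0)) (i : ℕ) : MeasurableSet (laguerreCell h φc y n i) := by
  have hcost : ∀ w : X, Measurable (fun x : X => h (dist x w)) := fun w =>
    measurable_comp_of_monotoneOn_Ici (continuous_id.dist continuous_const).measurable
      (fun _ => dist_nonneg) hmono
  simp only [laguerreCell, ofPred_forall]
  exact MeasurableSet.iInter fun j => MeasurableSet.iInter fun _ =>
    measurableSet_le ((hcost _).sub_const _) ((hcost _).sub_const _)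

lemma cost_add_le_of_mem_laguerreCell {i j : ℕ} (hi : i < n) (hj : j < n) {x x' : X}
    (hx : x ∈ laguerreCell h φc y n i) (hx' : x' ∈ laguerreCell h φc y n j) :
    h (dist x (y i)) + h (dist x' (y j)) ≤ h (dist x (y j)) + h (dist x' (y i)) := by
  linarith [hx j hj, hx' i hi]

end laguerreCell

def intermediateSet (A : Set X) (y : X) (t : ℝ) : Set X :=
  {z | ∃ x ∈ A, dist x z = t * dist x y ∧ dist z y = (1 - t) * dist x y}

lemma IsCompact.intermediateSet [ProperSpace X] {A : Set X} (hA : IsCompact A) (y : X)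
    (t : ℝ) : IsCompact (intermediateSet A y t) := by
  obtain ⟨R, hR⟩ := hA.isBounded.subset_closedBall y
  let S : Set (X × X) := {p | dist p.1 p.2 = t * dist p.1 y ∧ dist p.2 y = (1 - t) * dist p.1 y}
  have hS : IsClosed S :=
    (isClosed_eq (continuous_fst.dist continuous_snd)
      (continuous_const.mul (continuous_fst.dist continuous_const))).inter
    (isClosed_eq (continuous_snd.dist continuous_const)
      (continuous_const.mul (continuous_fst.dist continuous_const)))
  convert ((hA.prod (isCompact_closedBall y (|1 - t| * R))).inter_right hS).image
    continuous_snd using 1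
  ext z
  constructor
  · rintro ⟨x, hx, hxz, hzy⟩
    refine ⟨(x, z), ⟨⟨hx, ?_⟩, hxz, hzy⟩, rfl⟩
    rw [mem_closedBall, hzy]
    exact (mul_le_mul_of_nonneg_right (le_abs_self _) dist_nonneg).trans
      (mul_le_mul_of_nonneg_left (hR hx) (abs_nonneg _))
  · rintro ⟨⟨x, z⟩, ⟨⟨hx, -⟩, hxz, hzy⟩, rfl⟩
    exact ⟨x, hx, hxz, hzy⟩

section evoSet

variable {A A' : Set X} {Λ Λ' : Set (X × X)} {y : X} {t : ℝ}

lemma evoSet_mono (hA : A ⊆ A') (hΛ : Λ ⊆ Λ') : evoSet A Λ t ⊆ evoSet A' Λ' t :=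
  fun _ ⟨γ, hγ, h0, h01, ht⟩ => ⟨γ, hγ, hA h0, hΛ h01, ht⟩

lemma evoSet_prod_singleton_subset (ht : t ∈ Icc (0:ℝ) 1) :
    evoSet A (A ×ˢ {y}) t ⊆ intermediateSet A y t := by
  rintro _ ⟨γ, hγ, h0, ⟨-, rfl : γ 1 = y⟩, rfl⟩
  exact ⟨γ 0, h0, hγ.dist_zero_left ht, hγ.dist_one_right ht⟩

/-- Concatenating geodesics `x ⇝ z` and `z ⇝ y`, reparametrized on `[0,t]` and `[t,1]`,
gives a geodesic `x ⇝ y` through `z` at time `t`. -/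
lemma subset_evoSet_prod_singleton (hgeo : GeodesicMetricSpace X) (ht : t ∈ Icc (0:ℝ) 1) :
    intermediateSet A y t ⊆ evoSet A (A ×ˢ {y}) t := by
  rintro z ⟨x, hx, hxz, hzy⟩
  suffices ∃ γ : ℝ → X, IsGeodesic γ ∧ γ 0 = x ∧ γ 1 = y ∧ γ t = z by
    obtain ⟨γ, hγ, rfl, rfl, hγt⟩ := this
    exact ⟨γ, hγ, hx, ⟨hx, rfl⟩, hγt⟩
  rcases ht.1.eq_or_lt with rfl | ht0
  · obtain ⟨γ, hγ, hγ0, hγ1⟩ := hgeo x y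
    rw [zero_mul, dist_eq_zero] at hxz
    exact ⟨γ, hγ, hγ0, hγ1, hxz ▸ hγ0⟩
  rcases ht.2.eq_or_lt with rfl | ht1
  · obtain ⟨γ, hγ, hγ0, hγ1⟩ := hgeo x y
    rw [sub_self, zero_mul, dist_eq_zero] at hzy
    exact ⟨γ, hγ, hγ0, hγ1, hzy ▸ hγ1⟩
  obtain ⟨α, hα, hα0, hα1⟩ := hgeo x z
  obtain ⟨β, hβ, hβ0, hβ1⟩ := hgeo z y
  have h1t : (1:ℝ) - t ≠ 0 := (sub_pos.2 ht1).ne'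
  let c : ℝ → X := fun s => if s ≤ t then α (s / t) else β ((s - t) / (1 - t))
  have hleft : ∀ s ≤ t, c s = α (s / t) := fun s hs => if_pos hs
  have hright : ∀ s, t ≤ s → c s = β ((s - t) / (1 - t)) := fun s hs => by
    rcases hs.eq_or_lt with heq | hs
    · rw [← heq, hleft t le_rfl, div_self ht0.ne', sub_self, zero_div, hα1, hβ0]
    · exact if_neg hs.not_ge
  have hc0 : c 0 = x := by rw [hleft 0 ht.1, zero_div, hα0]
  have hc1 : c 1 = y := by rw [hright 1 ht.2, div_self h1t, hβ1]
  refine ⟨c, isGeodesic_of_Icc_split ⟨ht.1, ht.2⟩ (fun s hs s' hs' => ?_) (fun s hs s' hs' => ?_),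
    hc0, hc1, by rw [hleft t le_rfl, div_self ht0.ne', hα1]⟩ <;>
    rw [hc0, hc1]
  · have hα' := hα.dist_comp_div_sub ht0 hs hs'
    simp only [sub_zero] at hα'
    rw [hleft s hs.2, hleft s' hs'.2, hα', hα0, hα1, hxz]
    field_simp
  · rw [hright s hs.1, hright s' hs'.1, hβ.dist_comp_div_sub ht1 hs hs', hβ0, hβ1, hzy]
    field_simp

lemma evoSet_prod_singleton_eq (hgeo : GeodesicMetricSpace X) (ht : t ∈ Icc (0:ℝ) 1) :
    evoSet A (A ×ˢ {y}) t = intermediateSet A y t :=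
  (evoSet_prod_singleton_subset ht).antisymm (subset_evoSet_prod_singleton hgeo ht)

lemma IsCompact.evoSet_prod_singleton [ProperSpace X] (hgeo : GeodesicMetricSpace X)
    (hA : IsCompact A) (ht : t ∈ Icc (0:ℝ) 1) : IsCompact (evoSet A (A ×ˢ {y}) t) := by
  rw [evoSet_prod_singleton_eq hgeo ht]
  exact hA.intermediateSet y t

lemma disjoint_evoSet_of_subset_laguerreCell (hnb : NonBranching X) {h : ℝ → ℝ}
    (hconv : StrictConvexOn ℝ (Ici 0) h) (hmono : MonotoneOn h (Ici 0)) {φc : X → ℝ}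
    {y : ℕ → X} {n i j : ℕ} (hi : i < n) (hj : j < n) {C C' : Set X}
    (hC : C ⊆ laguerreCell h φc y n i) (hC' : C' ⊆ laguerreCell h φc y n j)
    (hCC' : Disjoint C C') (ht : t ∈ Ico (0:ℝ) 1) :
    Disjoint (evoSet C (C ×ˢ {y i}) t) (evoSet C' (C' ×ˢ {y j}) t) := by
  refine Set.disjoint_left.2 ?_
  rintro - ⟨γ, hγ, hγ0, ⟨-, hγ1 : γ 1 = y i⟩, rfl⟩ ⟨σ, hσ, hσ0, ⟨-, hσ1 : σ 1 = y j⟩, hmeet⟩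
  have hcost := cost_add_le_of_mem_laguerreCell hi hj (hC hγ0) (hC' hσ0)
  rw [← hγ1, ← hσ1] at hcost
  have := hnb.apply_zero_eq_of_cost_add_le hconv hmono hγ hσ hcost ht hmeet.symm
  exact hCC'.ne_of_mem hγ0 hσ0 this

lemma evoSet_subset_evoSet_Λn {h : ℝ → ℝ} {φc : X → ℝ} {y : ℕ → X} {n i : ℕ} (hi : i < n)
    {C : Set X} (hCA : C ⊆ A ∩ laguerreCell h φc y n i) (hA : A ⊆ Prod.fst '' Λ) :
    evoSet C (C ×ˢ {y i}) t ⊆ evoSet A (Λn h φc Λ y n) t :=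
  evoSet_mono (fun x hx => (hCA hx).1) fun p hp =>
    mem_biUnion hi ⟨⟨hA (hCA hp.1).1, (hCA hp.1).2⟩, hp.2⟩

end evoSet

end

theorem MeasureTheory.Measure.exists_disjoint_isCompact_subset_le_sum_add
    {α : Type*} [TopologicalSpace α] [MeasurableSpace α] (m : Measure α)
    [m.InnerRegularCompactLTTop] {A : Set α} (hA : MeasurableSet A) (hA' : m A ≠ ∞)
    {S : ℕ → Set α} (hS : ∀ i, MeasurableSet (S i)) {n : ℕ} (hcover : A ⊆ ⋃ i < n, S i)
    {ε : ℝ≥0∞} (hε : ε ≠ 0) :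
    ∃ C : ℕ → Set α, (∀ i, IsCompact (C i) ∧ C i ⊆ A ∩ S i) ∧
      Pairwise (fun i j => Disjoint (C i) (C j)) ∧ m A ≤ ∑ i ∈ Finset.range n, m (C i) + ε := by
  let B : ℕ → Set α := fun i => A ∩ disjointed S i
  have hB : ∀ i, ∃ C ⊆ B i, IsCompact C ∧ m (B i) < m C + ε / n := fun i =>
    (hA.inter (MeasurableSet.disjointed hS i)).exists_isCompact_lt_add
      (measure_ne_top_of_subset inter_subset_left hA') (ENNReal.div_ne_zero.2 ⟨hε, by simp⟩)
  choose C hCB hC hmC using hB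
  have hAB : A ⊆ ⋃ i ∈ Finset.range n, B i := fun x hx => by
    obtain ⟨i, hi, hxi⟩ := mem_iUnion₂.1 (hcover hx)
    have : x ∈ ⋃ j ∈ Finset.Iic i, disjointed S j := by
      rw [biUnion_Iic_disjointed]; exact le_partialSups S i hxi
    obtain ⟨j, hj, hxj⟩ := mem_iUnion₂.1 this
    exact mem_biUnion (Finset.mem_range.2 ((Finset.mem_Iic.1 hj).trans_lt hi)) ⟨hx, hxj⟩
  refine ⟨C, fun i => ⟨hC i, fun x hx => ⟨(hCB i hx).1, disjointed_subset S i (hCB i hx).2⟩⟩,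
    fun i j hij => ((disjoint_disjointed S hij).mono inter_subset_right inter_subset_right).mono
      (hCB i) (hCB j), ?_⟩
  calc m A ≤ ∑ i ∈ Finset.range n, m (B i) :=
        (measure_mono hAB).trans (measure_biUnion_finset_le _ _)
    _ ≤ ∑ i ∈ Finset.range n, (m (C i) + ε / n) := Finset.sum_le_sum fun i _ => (hmC i).le
    _ ≤ ∑ i ∈ Finset.range n, m (C i) + ε := by
        rw [Finset.sum_add_distrib, Finset.sum_const, Finset.card_range, nsmul_eq_mul]
        gcongr
        exact ENNReal.mul_div_le

theorem evolution_estimate_approximating_sets_general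
    {X : Type*} [MetricSpace X] [ProperSpace X]
    [MeasurableSpace X] [BorelSpace X]
    (hgeo : GeodesicMetricSpace X) (hnb : NonBranching X)
    (m : Measure X) [IsFiniteMeasureOnCompacts m]
    (f : ℝ → ℝ) (hm : EvolutionEstimate m f)
    (h : ℝ → ℝ) (hconv : StrictConvexOn ℝ (Set.Ici (0:ℝ)) h)
    (hmono : MonotoneOn h (Set.Ici (0:ℝ)))
    (φc : X → ℝ)
    (Λ : Set (X × X))
    (y : ℕ → X)
    (n : ℕ) (hn : 1 ≤ n)
    (A : Set X) (hA : IsCompact A) (hAsub : A ⊆ Prod.fst '' Λ)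
    (t : ℝ) (ht : t ∈ Set.Ico (0:ℝ) 1) :
    ENNReal.ofReal (f t) * m A ≤ m (evoSet A (Λn h φc Λ y n) t) := by
  obtain ⟨-, -, hf01, hevo⟩ := hm
  have htI : t ∈ Icc (0:ℝ) 1 := Ico_subset_Icc_self ht
  refine ENNReal.le_of_forall_pos_le_add fun ε hε _ => ?_
  obtain ⟨C, hC, hCdisj, hAC⟩ := m.exists_disjoint_isCompact_subset_le_sum_add hA.measurableSet
    hA.measure_lt_top.ne (measurableSet_laguerreCell (φc := φc) (y := y) (n := n) hmono)
    (fun x _ => by simpa only [mem_iUnion₂, exists_prop] using exists_mem_laguerreCell hn x)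
    (ε := ε) (by exact_mod_cast hε.ne')
  let U : ℕ → Set X := fun i => evoSet (C i) (C i ×ˢ {y i}) t
  have hUdisj : PairwiseDisjoint (Finset.range n : Set ℕ) U := fun i hi j hj hij =>
    disjoint_evoSet_of_subset_laguerreCell hnb hconv hmono (Finset.mem_range.1 hi)
      (Finset.mem_range.1 hj) (fun x hx => (hC i).2 hx |>.2) (fun x hx => (hC j).2 hx |>.2)
      (hCdisj hij) ht
  have hU : ⋃ i ∈ Finset.range n, U i ⊆ evoSet A (Λn h φc Λ y n) t := iUnion₂_subset fun i hi =>
    evoSet_subset_evoSet_Λn (Finset.mem_range.1 hi) (hC i).2 hAsub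
  calc ENNReal.ofReal (f t) * m A
      ≤ ∑ i ∈ Finset.range n, ENNReal.ofReal (f t) * m (C i) + ENNReal.ofReal (f t) * ε := by
        rw [← Finset.mul_sum, ← mul_add]; gcongr
    _ ≤ ∑ i ∈ Finset.range n, m (U i) + ε := by
        gcongr with i
        · exact hevo (C i) (hC i).1 (y i) t htI
        · exact mul_le_of_le_one_left' (ENNReal.ofReal_le_one.2 (hf01 t htI).2)
    _ = m (⋃ i ∈ Finset.range n, U i) + ε := by
        rw [measure_biUnion_finset hUdisj fun i _ =>
          ((hC i).1.evoSet_prod_singleton hgeo htI).measurableSet]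
    _ ≤ m (evoSet A (Λn h φc Λ y n) t) + ε := by gcongr

theorem evolution_estimate_approximating_sets
    {X : Type*} [MetricSpace X] [ProperSpace X] [CompleteSpace X]
    [TopologicalSpace.SeparableSpace X] [MeasurableSpace X] [BorelSpace X]
    (hgeo : GeodesicMetricSpace X) (hnb : NonBranching X)
    (m : Measure X) [IsFiniteMeasureOnCompacts m]
    (f : ℝ → ℝ) (hm : EvolutionEstimate m f)
    (h : ℝ → ℝ) (hconv : StrictConvexOn ℝ (Set.Ici (0:ℝ)) h)
    (hmono : MonotoneOn h (Set.Ici (0:ℝ))) (hpos : ∀ x ∈ Set.Ici (0:ℝ), 0 ≤ h x)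
    (K : Set X) (hK : IsCompact K)
    (φ φc : X → ℝ) (hφ : ContinuousOn φ K) (hφc : ContinuousOn φc K)
    (hpot : ∀ x ∈ K, ∀ y ∈ K, φ x + φc y ≤ h (dist x y))
    (Λ : Set (X × X)) (hΛcpt : IsCompact Λ) (hΛΓ : Λ ⊆ contactSet h φ φc K)
    (y : ℕ → X) (hyin : ∀ i, y i ∈ Prod.snd '' Λ)
    (hydense : Prod.snd '' Λ ⊆ closure (Set.range y))
    (n : ℕ) (hn : 1 ≤ n)
    (A : Set X) (hA : IsCompact A) (hAsub : A ⊆ Prod.fst '' Λ)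
    (t : ℝ) (ht : t ∈ Set.Ico (0:ℝ) 1) :
    ENNReal.ofReal (f t) * m A ≤ m (evoSet A (Λn h φc Λ y n) t) :=
  evolution_estimate_approximating_sets_general hgeo hnb m f hm h hconv hmono φc Λ y n hn A hA hAsub
    t ht
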